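/- arXiv:2311.04656 — 2 statements merged into one kernel-verified Lean document; each statement's English description precedes it below -/
import Mathlib

section
/- Let H be an induced subgraph of a finite simple graph G, and let u and v be adjacent vertices of G with v ∉ V(H). If u and v are twins in the subgraph of G induced by V(H) ∪ {u, v}, then G is not H-pivot-unique. -/
/-!  Basic notions: local complementation, edge pivot, pivot-equivalence, pivot-minors. -/

variable {V : Type*} {W : Type*}

/-- Local complementation at a vertex `u`: complement the adjacency inside the
neighbourhood of `u`. -/
def localComp (G : SimpleGraph V) (u : V) : SimpleGraph V where
  Adj x y := x ≠ y ∧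
    ((G.Adj u x ∧ G.Adj u y ∧ ¬ G.Adj x y) ∨ (¬ (G.Adj u x ∧ G.Adj u y) ∧ G.Adj x y))
  symm := by
    constructor
    intro x y h
    obtain ⟨hne, h⟩ := h
    refine ⟨hne.symm, ?_⟩
    rw [G.adj_comm y x]
    tauto
  loopless := by
    constructor
    intro x h
    exact h.1 rfl

/-- The edge pivot `G ∧ uv = ((G * u) * v) * u`. -/
def pivotEdge (G : SimpleGraph V) (u v : V) : SimpleGraph V :=
  localComp (localComp (localComp G u) v) u

/-- One pivot step: pivoting along an edge of the graph. -/
def PivotStep (G G' : SimpleGraph V) : Prop :=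
  ∃ u v, G.Adj u v ∧ G' = pivotEdge G u v

/-- Two graphs on the same vertex set are pivot-equivalent if one can be obtained
from the other by a sequence of edge pivots. -/
def PivotEquiv (G G' : SimpleGraph V) : Prop :=
  Relation.ReflTransGen PivotStep G G'

/-- `H` is a pivot-minor of `G` on the vertex subset `s`: `H` is obtained (up to
isomorphism) from `G` by a sequence of edge pivots and deletions of the vertices
outside `s`.  Since pivoting an edge commutes with deleting a vertex not on that
edge, this is equivalent to performing all the edge pivots first and then deleting
the vertices outside `s`, which is how we state it. -/
def HasPivotMinorOn (G : SimpleGraph V) (s : Set V) (H : SimpleGraph W) : Prop :=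
  ∃ G' : SimpleGraph V, PivotEquiv G G' ∧ Nonempty ((G'.induce s) ≃g H)

/-- `G` contains a pivot-minor isomorphic to `H`. -/
def HasPivotMinor (G : SimpleGraph V) (H : SimpleGraph W) : Prop :=
  ∃ s : Set V, HasPivotMinorOn G s H

/-- `G'` is a result of contracting the vertex `v` in `G` (denoted `G/v`):
if `v` is isolated this is `G - v`, and otherwise it is `(G ∧ zv) - v`
for some neighbour `z` of `v` (well defined up to pivot-equivalence). -/
def IsContraction (G : SimpleGraph V) (v : V) (G' : SimpleGraph ↥{u : V | u ≠ v}) : Prop :=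
  ((∀ z, ¬ G.Adj v z) ∧ G' = G.induce {u : V | u ≠ v}) ∨
    (∃ z, G.Adj v z ∧ G' = (pivotEdge G z v).induce {u : V | u ≠ v})

/-- `G` is `H`-pivot-unique: `G` contains a pivot-minor isomorphic to `H` and for
every vertex `v`, at most one of `G - v` and `G / v` contains a pivot-minor
isomorphic to `H`. -/
def PivotUnique (G : SimpleGraph V) (H : SimpleGraph W) : Prop :=
  HasPivotMinor G H ∧
    ∀ v : V, ¬ (HasPivotMinor (G.induce {u : V | u ≠ v}) H ∧
      ∃ G' : SimpleGraph ↥{u : V | u ≠ v}, IsContraction G v G' ∧ HasPivotMinor G' H)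

/-- `G` contains an induced subgraph isomorphic to `H`. -/
def HasInducedSubgraphIso (G : SimpleGraph V) (H : SimpleGraph W) : Prop :=
  ∃ s : Set V, Nonempty ((G.induce s) ≃g H)

/-! Deleting `v` keeps `G[s]`, since `v ∉ s`. Contracting `v` along the edge `vu`, that is pivoting
`uv` and then deleting `v`, keeps it as well: the pivot gives `u` the old neighbourhood of `v`, and
among the other vertices it only toggles edges `xy` where `x` and `y` have distinct nonempty
neighbourhoods in `{u, v}`. As `u` and `v` are twins on `s`, neither effect changes adjacency
inside `s`. -/

section Pivot

variable (G : SimpleGraph V) {u v : V}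

lemma localComp_adj (x y : V) :
    (localComp G u).Adj x y ↔ x ≠ y ∧
      ((G.Adj u x ∧ G.Adj u y ∧ ¬ G.Adj x y) ∨ (¬ (G.Adj u x ∧ G.Adj u y) ∧ G.Adj x y)) :=
  Iff.rfl

lemma pivotEdge_adj_left (huv : G.Adj u v) {y : V} (hyu : y ≠ u) (hyv : y ≠ v) :
    (pivotEdge G u v).Adj u y ↔ G.Adj v y := by
  simp only [pivotEdge, localComp_adj, G.adj_comm v u, huv, huv.ne.symm, hyu.symm, hyv.symm,
    G.loopless.irrefl u, ne_eq, not_false_eq_true, true_and]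
  by_cases G.Adj u y <;> by_cases G.Adj v y <;> simp_all

lemma pivotEdge_adj_of_adj_iff (huv : G.Adj u v) {x y : V} (hxu : x ≠ u) (hxv : x ≠ v)
    (hyu : y ≠ u) (hyv : y ≠ v) (hx : G.Adj u x ↔ G.Adj v x) (hy : G.Adj u y ↔ G.Adj v y) :
    (pivotEdge G u v).Adj x y ↔ G.Adj x y := by
  simp only [pivotEdge, localComp_adj, G.adj_comm v u, ← hx, ← hy, huv, huv.ne.symm,
    hxu.symm, hxv.symm, hyu.symm, hyv.symm, ne_eq, not_false_eq_true, true_and]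
  by_cases x = y <;> by_cases G.Adj u x <;> by_cases G.Adj u y <;> by_cases G.Adj x y <;> simp_all

lemma pivotEdge_adj_of_twins {s : Set V} (huv : G.Adj u v) (hv : v ∉ s)
    (htwin : ∀ w ∈ s, w ≠ u → (G.Adj u w ↔ G.Adj v w)) :
    ∀ x ∈ s, ∀ y ∈ s, (pivotEdge G u v).Adj x y ↔ G.Adj x y := by
  have hne : ∀ w ∈ s, w ≠ v := fun w hw => ne_of_mem_of_not_mem hw hv
  intro x hx y hy
  obtain rfl | hxy := eq_or_ne x y
  · simp only [SimpleGraph.irrefl]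
  obtain rfl | hxu := eq_or_ne x u
  · rw [pivotEdge_adj_left G huv hxy.symm (hne y hy), htwin y hy hxy.symm]
  obtain rfl | hyu := eq_or_ne y u
  · rw [SimpleGraph.adj_comm, pivotEdge_adj_left G huv hxu (hne x hx), ← htwin x hx hxu,
      G.adj_comm]
  exact pivotEdge_adj_of_adj_iff G huv hxu (hne x hx) hyu (hne y hy) (htwin x hx hxu)
    (htwin y hy hyu)

end Pivot

lemma hasPivotMinor_induce_of_adj_iff {K G : SimpleGraph V} {s t : Set V} (hst : s ⊆ t)
    (hK : ∀ x ∈ s, ∀ y ∈ s, K.Adj x y ↔ G.Adj x y) :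
    HasPivotMinor (K.induce t) (G.induce s) :=
  ⟨Subtype.val ⁻¹' s, K.induce t, Relation.ReflTransGen.refl,
    ⟨{ toFun := fun x => ⟨x.1.1, x.2⟩
       invFun := fun y => ⟨⟨y.1, hst y.2⟩, y.2⟩
       map_rel_iff' := fun {a b} => (hK a.1.1 a.2 b.1.1 b.2).symm }⟩⟩

theorem not_pivotUnique_of_twins_general {V : Type*} (G : SimpleGraph V)
    (s : Set V) (u v : V) (huv : G.Adj u v) (hv : v ∉ s)
    (htwin : ∀ w ∈ s ∪ {u, v}, w ≠ u → w ≠ v → (G.Adj u w ↔ G.Adj v w)) :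
    ¬ PivotUnique G (G.induce s) := by
  rintro ⟨-, hunique⟩
  have hsv : s ⊆ {w | w ≠ v} := fun w hw => ne_of_mem_of_not_mem hw hv
  have hpivot := pivotEdge_adj_of_twins G huv hv fun w hw hwu =>
    htwin w (Or.inl hw) hwu (hsv hw)
  exact hunique v ⟨hasPivotMinor_induce_of_adj_iff hsv fun _ _ _ _ => Iff.rfl,
    _, Or.inr ⟨u, huv.symm, rfl⟩, hasPivotMinor_induce_of_adj_iff hsv hpivot⟩

/-- Let `H = G[s]` be an induced subgraph of `G` and let `u, v` be
adjacent vertices of `G` with `v ∉ s`. If `u` and `v` are twins in the subgraph of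
`G` induced by `s ∪ {u, v}`, then `G` is not `H`-pivot-unique. -/
theorem not_pivotUnique_of_twins {V : Type*} [Fintype V] (G : SimpleGraph V)
    (s : Set V) (u v : V) (huv : G.Adj u v) (hv : v ∉ s)
    (htwin : ∀ w ∈ s ∪ {u, v}, w ≠ u → w ≠ v → (G.Adj u w ↔ G.Adj v w)) :
    ¬ PivotUnique G (G.induce s) :=
  not_pivotUnique_of_twins_general G s u v huv hv htwin
end

section
/- Every leaf-attached complete multipartite graph has no pivot-minor isomorphic to 2P₂. -/
/-!  Basic notions: local complementation, edge pivot, pivot-equivalence, pivot-minors. -/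

variable {V : Type*} {W : Type*}

/-- The graph `2P₂`: the disjoint union of the two edges `0-1` and `2-3`. -/
def twoP2 : SimpleGraph (Fin 4) :=
  SimpleGraph.fromRel (fun x y => (x.val = 0 ∧ y.val = 1) ∨ (x.val = 2 ∧ y.val = 3))

/-- A leaf-attached complete multipartite graph: a graph obtained from a complete
multipartite graph (two vertices adjacent iff they lie in different parts, the
parts being the classes of the equivalence relation `r` on the `core`) by
attaching zero or more pendant vertices to each singleton vertex.  Every vertex
outside the `core` is a pendant vertex whose unique neighbour is a vertex of the
`core` forming a part of size one. -/
def IsLeafAttachedCMP {V : Type*} (G : SimpleGraph V) : Prop :=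
  ∃ (core : Set V) (r : V → V → Prop),
    (∀ x ∈ core, r x x) ∧ (∀ x y, r x y → r y x) ∧ (∀ x y z, r x y → r y z → r x z) ∧
    (∀ x y, r x y → x ∈ core ∧ y ∈ core) ∧
    (∀ x ∈ core, ∀ y ∈ core, (G.Adj x y ↔ ¬ r x y)) ∧
    (∀ v, v ∉ core → ∃ u ∈ core, (∀ w, G.Adj v w ↔ w = u) ∧ (∀ w, r u w → w = u))

/-!
Describe a leaf-attached complete multipartite graph by a partition of its vertices into blocks
together with a set `C` of centres: every block is an independent set of centres, or a star whose
middle vertex is its only centre, and centres in different blocks are adjacent. Pivoting an edge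
keeps the blocks. At an edge `uv` between two centres it exchanges, in the blocks of `u` and of
`v`, the centres other than `u`, `v` with the non-centres; at a pendant edge it just swaps the leaf
with the centre. In such a graph the centres of two edges with no edge between them would lie in
one block, which forces an edge between the two edges, so no induced `2P₂` ever appears.
-/

/-- `x` and `y` lie in two different ones of the classes `N(u) \ N(v)`, `N(v) \ N(u)` and
`N(u) ∩ N(v)` of vertices other than `u`, `v`. -/
def PivotToggles (G : SimpleGraph V) (u v x y : V) : Prop :=
  x ≠ u ∧ x ≠ v ∧ y ≠ u ∧ y ≠ v ∧ (G.Adj u x ∨ G.Adj v x) ∧ (G.Adj u y ∨ G.Adj v y) ∧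
    ¬ ((G.Adj u x ↔ G.Adj u y) ∧ (G.Adj v x ↔ G.Adj v y))

section Pivot

variable {G : SimpleGraph V} {u v : V}

theorem pivotEdge_adj [DecidableEq V] (huv : G.Adj u v) (x y : V) :
    (pivotEdge G u v).Adj x y ↔
      Xor (G.Adj (Equiv.swap u v x) (Equiv.swap u v y)) (PivotToggles G u v x y) := by
  have hne := huv.ne
  simp only [pivotEdge, localComp, PivotToggles, Equiv.swap_apply_def, xor_def]
  by_cases hxu : x = u <;> by_cases hxv : x = v <;> by_cases hyu : y = u <;>
    by_cases hyv : y = v <;>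
    simp [hxu, hxv, hyu, hyv, huv, huv.symm, hne, hne.symm, G.adj_comm _ u, G.adj_comm _ v,
      eq_comm (a := u), eq_comm (a := v)] <;>
    by_cases G.Adj u x <;> by_cases G.Adj v x <;> by_cases G.Adj u y <;> by_cases G.Adj v y <;>
    by_cases G.Adj x y <;> by_cases x = y <;> simp_all

theorem pivotEdge_comm (huv : G.Adj u v) : pivotEdge G u v = pivotEdge G v u := by
  classical
  ext x y
  have htoggle : PivotToggles G u v x y ↔ PivotToggles G v u x y := by
    unfold PivotToggles
    tauto
  rw [pivotEdge_adj huv, pivotEdge_adj huv.symm, Equiv.swap_comm, htoggle]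

theorem pivotEdge_adj_of_pendant [DecidableEq V] (huv : G.Adj u v)
    (hv : ∀ w, G.Adj v w → w = u) (x y : V) :
    (pivotEdge G u v).Adj x y ↔ G.Adj (Equiv.swap u v x) (Equiv.swap u v y) := by
  have hno : ¬ PivotToggles G u v x y := by
    rintro ⟨hxu, -, hyu, -, hx, hy, hdiff⟩
    have hx : G.Adj u x := hx.resolve_right fun h => hxu (hv x h)
    have hy : G.Adj u y := hy.resolve_right fun h => hyu (hv y h)
    exact hdiff ⟨iff_of_true hx hy, iff_of_false (fun h => hxu (hv x h)) fun h => hyu (hv y h)⟩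
  rw [pivotEdge_adj huv, xor_def]
  tauto

end Pivot

/-- `b x` is the block of `x` and `C` the set of centres. -/
structure IsCentredPartition {ι : Type*} (G : SimpleGraph V) (b : V → ι) (C : Set V) : Prop where
  adj_iff : ∀ x y, G.Adj x y ↔ (x ∈ C ∧ y ∈ C ∧ b x ≠ b y) ∨ (b x = b y ∧ Xor (x ∈ C) (y ∈ C))
  eq_of_mem : ∀ {x y z}, x ∉ C → y ∈ C → z ∈ C → b x = b y → b x = b z → y = z

namespace IsCentredPartition

variable {ι : Type*} {G : SimpleGraph V} {b : V → ι} {C : Set V}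

theorem pivotEdge_of_mem_of_mem [DecidableEq V] (hG : IsCentredPartition G b C) {u v : V}
    (hu : u ∈ C) (hv : v ∈ C) (huv : b u ≠ b v) :
    IsCentredPartition (pivotEdge G u v) b
      {x | x = u ∨ x = v ∨ (x ∈ C ↔ b x ≠ b u ∧ b x ≠ b v)} := by
  have hadj : G.Adj u v := (hG.adj_iff u v).2 (Or.inl ⟨hu, hv, huv⟩)
  constructor
  · intro x y
    rw [pivotEdge_adj hadj]
    simp only [PivotToggles, hG.adj_iff, Equiv.swap_apply_def, Set.mem_ofPred_eq, xor_def]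
    grind [hG.eq_of_mem]
  · intro x y z hx hy hz hxy hxz
    simp only [Set.mem_ofPred_eq] at hx hy hz
    grind [hG.eq_of_mem]

theorem pivotEdge_of_mem_of_not_mem [DecidableEq V] (hG : IsCentredPartition G b C) {u v : V}
    (hu : u ∈ C) (hv : v ∉ C) (huv : G.Adj u v) :
    IsCentredPartition (pivotEdge G u v) b (Equiv.swap u v ⁻¹' C) := by
  have hbuv : b u = b v := (((hG.adj_iff u v).1 huv).resolve_left fun h => hv h.2.1).1
  have hpendant : ∀ w, G.Adj v w → w = u := fun w hw => by
    simp only [hG.adj_iff, hv, false_and, false_or, xor_def] at hw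
    exact hG.eq_of_mem hv (by tauto) hu hw.1 hbuv.symm
  have hb : ∀ x, b (Equiv.swap u v x) = b x := fun x => by
    rw [Equiv.swap_apply_def]
    split_ifs <;> simp_all
  refine ⟨fun x y => ?_, fun hx hy hz hxy hxz => (Equiv.swap u v).injective ?_⟩
  · rw [pivotEdge_adj_of_pendant huv hpendant, hG.adj_iff, hb, hb]
    rfl
  · exact hG.eq_of_mem hx hy hz (by rwa [hb, hb]) (by rwa [hb, hb])

theorem exists_pivotEdge (hG : IsCentredPartition G b C) {u v : V} (huv : G.Adj u v) :
    ∃ C', IsCentredPartition (pivotEdge G u v) b C' := by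
  classical
  have h := (hG.adj_iff u v).1 huv
  by_cases hu : u ∈ C <;> by_cases hv : v ∈ C
  · exact ⟨_, hG.pivotEdge_of_mem_of_mem hu hv (by simp_all)⟩
  · exact ⟨_, hG.pivotEdge_of_mem_of_not_mem hu hv huv⟩
  · rw [pivotEdge_comm huv]
    exact ⟨_, hG.pivotEdge_of_mem_of_not_mem hv hu huv.symm⟩
  · simp_all

theorem exists_of_pivotEquiv {G' : SimpleGraph V} (hG : IsCentredPartition G b C)
    (h : PivotEquiv G G') : ∃ C', IsCentredPartition G' b C' := by
  induction h with
  | refl => exact ⟨C, hG⟩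
  | tail _ hstep ih =>
    obtain ⟨u, v, huv, rfl⟩ := hstep
    obtain ⟨C', hC'⟩ := ih
    exact hC'.exists_pivotEdge huv

theorem false_of_induced_twoP2 (hG : IsCentredPartition G b C) {w x y z : V}
    (hwx : G.Adj w x) (hyz : G.Adj y z) (hwy : ¬ G.Adj w y) (hwz : ¬ G.Adj w z)
    (hxy : ¬ G.Adj x y) (hxz : ¬ G.Adj x z) : False := by
  simp only [hG.adj_iff, xor_def] at *
  grind

end IsCentredPartition

theorem IsLeafAttachedCMP.exists_isCentredPartition {G : SimpleGraph V} (h : IsLeafAttachedCMP G) :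
    ∃ (b : V → Set V) (C : Set V), IsCentredPartition G b C := by
  obtain ⟨core, r, hrefl, hsymm, htrans, -, hadj, hleaf⟩ := h
  have hanchor : ∀ x, ∃ a ∈ core, (x ∈ core → a = x) ∧
      (x ∉ core → (∀ w, G.Adj x w ↔ w = a) ∧ ∀ w, r a w → w = a) := fun x => by
    by_cases hx : x ∈ core
    · exact ⟨x, hx, fun _ => rfl, absurd hx⟩
    · obtain ⟨a, ha, hleaf⟩ := hleaf x hx
      exact ⟨a, ha, fun h => absurd h hx, fun _ => hleaf⟩
  choose a ha hax hleafx using hanchor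
  have hclass : ∀ x y, {z | r (a x) z} = {z | r (a y) z} ↔ r (a x) (a y) := fun x y =>
    ⟨fun h => (Set.ext_iff.1 h (a y)).2 (hrefl _ (ha y)),
      fun h => Set.ext fun z => ⟨htrans _ _ _ (hsymm _ _ h), htrans _ _ _ h⟩⟩
  refine ⟨fun x => {z | r (a x) z}, core, ⟨fun x y => ?_, fun {x y z} hx hy hz hxy hxz => ?_⟩⟩
  · simp only [ne_eq, hclass]
    grind [G.adj_comm]
  · rw [hclass, hax y hy] at hxy
    rw [hclass, hax z hz] at hxz
    exact ((hleafx x hx).2 y hxy).trans ((hleafx x hx).2 z hxz).symm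

theorem leafAttachedCMP_twoP2_free_general {V : Type*} (G : SimpleGraph V)
    (h : IsLeafAttachedCMP G) :
    ¬ HasPivotMinor G twoP2 := by
  rintro ⟨s, G', hpivot, ⟨e⟩⟩
  obtain ⟨b, C, hG⟩ := h.exists_isCentredPartition
  obtain ⟨C', hG'⟩ := hG.exists_of_pivotEquiv hpivot
  have hadj : ∀ i j, G'.Adj (e.symm i) (e.symm j) ↔ twoP2.Adj i j := fun _ _ => e.symm.map_rel_iff
  exact hG'.false_of_induced_twoP2 ((hadj 0 1).2 (by simp [twoP2])) ((hadj 2 3).2 (by simp [twoP2]))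
    (mt (hadj 0 2).1 (by simp [twoP2])) (mt (hadj 0 3).1 (by simp [twoP2]))
    (mt (hadj 1 2).1 (by simp [twoP2])) (mt (hadj 1 3).1 (by simp [twoP2]))

/-- Every leaf-attached complete multipartite graph has no
pivot-minor isomorphic to `2P₂`. -/
theorem leafAttachedCMP_twoP2_free {V : Type*} [Fintype V] (G : SimpleGraph V)
    (h : IsLeafAttachedCMP G) :
    ¬ HasPivotMinor G twoP2 :=
  leafAttachedCMP_twoP2_free_general G h
end
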